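/- arXiv:1803.08012 — 3 statements merged into one kernel-verified Lean document; each statement's English description precedes it below -/
import Mathlib

section
/- Let Q be a unital star ring and q : Fin n → Fin n → Q a family of elements satisfying ∑_{k=1}^{n} q_{k i} (q_{k j})⋆ = δ_{ij}·1 for all i, j. Then for every p ≥ 1 and all tuples μ = (μ₁,…,μ_p) and ν = (ν₁,…,ν_p) in (Fin n)^p, one has ∑ over all tuples (i₁,…,i_p) ∈ (Fin n)^p of q_{i₁ μ₁} q_{i₂ μ₂} ⋯ q_{i_p μ_p} (q_{i_p ν_p})⋆ (q_{i_{p−1} ν_{p−1}})⋆ ⋯ (q_{i₁ ν₁})⋆ = 1 if μ = ν, and = 0 if μ ≠ ν. -/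
/-- In a unital star ring, if a family `q : Fin n → Fin n → Q` satisfies
`∑_k q_{k i} (q_{k j})⋆ = δ_{ij}`, then for every `p ≥ 1` and all tuples `μ ν : Fin p → Fin n`,
`∑_{i : Fin p → Fin n} q_{i₁ μ₁} ⋯ q_{i_p μ_p} (q_{i_p ν_p})⋆ ⋯ (q_{i₁ ν₁})⋆`
equals `1` if `μ = ν` and `0` otherwise.  (Note that
`(q_{i_p ν_p})⋆ ⋯ (q_{i₁ ν₁})⋆ = (q_{i₁ ν₁} ⋯ q_{i_p ν_p})⋆`.) -/
theorem sum_prod_star_prod_eq_delta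
    {Q : Type*} [Ring Q] [StarRing Q] {n : ℕ} (q : Fin n → Fin n → Q)
    (h : ∀ i j, ∑ k, q k i * star (q k j) = if i = j then (1 : Q) else 0)
    (p : ℕ) (hp : 1 ≤ p) (μ ν : Fin p → Fin n) :
    ∑ i : Fin p → Fin n,
        (List.ofFn fun t => q (i t) (μ t)).prod *
          star (List.ofFn fun t => q (i t) (ν t)).prod
      = if μ = ν then (1 : Q) else 0 := by
  clear hp
  induction p with
  | zero =>
    simp [Subsingleton.elim μ ν]
  | succ p ih =>
    rw [← Equiv.sum_comp (Fin.snocEquiv (fun _ : Fin (p + 1) => Fin n)),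
      Fintype.sum_prod_type_right]
    have key : ∀ g : Fin p → Fin n,
        (∑ x : Fin n,
          (List.ofFn fun t => q (Fin.snocEquiv (fun _ => Fin n) (x, g) t) (μ t)).prod *
            star (List.ofFn fun t => q (Fin.snocEquiv (fun _ => Fin n) (x, g) t) (ν t)).prod)
        = (if μ (Fin.last p) = ν (Fin.last p) then (1 : Q) else 0) *
            ((List.ofFn fun t => q (g t) (μ t.castSucc)).prod *
              star (List.ofFn fun t => q (g t) (ν t.castSucc)).prod) := by
      intro g
      have : ∀ x : Fin n,
          (List.ofFn fun t => q (Fin.snocEquiv (fun _ => Fin n) (x, g) t) (μ t)).prod *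
            star (List.ofFn fun t => q (Fin.snocEquiv (fun _ => Fin n) (x, g) t) (ν t)).prod
          = (List.ofFn fun t => q (g t) (μ t.castSucc)).prod *
              (q x (μ (Fin.last p)) * star (q x (ν (Fin.last p)))) *
              star (List.ofFn fun t => q (g t) (ν t.castSucc)).prod := by
        intro x
        rw [List.ofFn_succ' (fun t => q (Fin.snocEquiv (fun _ => Fin n) (x, g) t) (μ t)),
          List.ofFn_succ' (fun t => q (Fin.snocEquiv (fun _ => Fin n) (x, g) t) (ν t))]
        simp only [Fin.snocEquiv_apply, Fin.snoc_castSucc, Fin.snoc_last,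
          List.concat_eq_append, List.prod_append, List.prod_cons, List.prod_nil,
          mul_one, star_mul]
        simp [mul_assoc]
      simp only [this]
      rw [← Finset.sum_mul, ← Finset.mul_sum, h]
      split <;> simp [mul_assoc]
    simp only [key]
    rw [← Finset.mul_sum, ih]
    have hiff : (μ = ν) ↔
        ((fun t : Fin p => μ t.castSucc) = (fun t => ν t.castSucc)) ∧
          μ (Fin.last p) = ν (Fin.last p) := by
      constructor
      · rintro rfl; exact ⟨rfl, rfl⟩
      · rintro ⟨h1, h2⟩
        funext t
        exact Fin.lastCases h2 (fun j => congrFun h1 j) t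
    by_cases hl : μ (Fin.last p) = ν (Fin.last p) <;>
      by_cases hi : (fun t : Fin p => μ t.castSucc) = fun t => ν t.castSucc <;>
      simp [hl, hi, hiff]
end

section
/- For all words μ, ν with |μ| = |ν| and every element a ∈ A, one has φ(S_μ a (S_ν)⋆) = n^{−|μ|} φ(a) if μ = ν, and φ(S_μ a (S_ν)⋆) = 0 if μ ≠ ν. -/
/-! Both sides are continuous linear functionals of `a`, so by density it suffices to compare
them on `a = S_α S_β⋆`. There `S_μ a S_ν⋆ = S_{μα} S_{νβ}⋆`, and since `|μ| = |ν|` we have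
`μα = νβ` iff `μ = ν` and `α = β`, so the prescribed values of `φ` factor accordingly. -/

open scoped ComplexOrder

noncomputable section

/-- The product `S_{μ₁} ⋯ S_{μ_p}` along a word `μ` (with `S_μ = 1` for the empty word). -/
def wordProd {A : Type*} [Monoid A] {n : ℕ} (S : Fin n → A) (μ : List (Fin n)) : A :=
  (μ.map S).prod

/-- `B_{r,s} = Span { S_μ S_ν⋆ : |μ| = r, |ν| = s }`;  `F_k = B_{k,k}`. -/
def Bspan {A : Type*} [Ring A] [Algebra ℂ A] [StarRing A] {n : ℕ}
    (S : Fin n → A) (r s : ℕ) : Submodule ℂ A :=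
  Submodule.span ℂ
    {a | ∃ μ ν : List (Fin n), μ.length = r ∧ ν.length = s ∧
        a = wordProd S μ * star (wordProd S ν)}

/-- `W_0 = ℂ·1` and, for `k ≥ 1`,
`W_k = {x ∈ F_k : φ(y⋆ x) = 0 for all y ∈ F_{k-1}}`. -/
def Wsub {A : Type*} [NormedRing A] [NormedAlgebra ℂ A] [StarRing A] {n : ℕ}
    (φ : A →L[ℂ] ℂ) (S : Fin n → A) : ℕ → Submodule ℂ A
  | 0 => Submodule.span ℂ {(1 : A)}
  | (k + 1) =>
      Bspan S (k + 1) (k + 1) ⊓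
        ⨅ y ∈ Bspan S k k,
          LinearMap.ker ((φ : A →ₗ[ℂ] ℂ) ∘ₗ LinearMap.mulLeft ℂ (star y))

/-- `V¹_{k,r} = Span { S_μ x : |μ| = r, x ∈ W_k }`. -/
def V1 {A : Type*} [NormedRing A] [NormedAlgebra ℂ A] [StarRing A] {n : ℕ}
    (φ : A →L[ℂ] ℂ) (S : Fin n → A) (k r : ℕ) : Submodule ℂ A :=
  Submodule.span ℂ
    {a | ∃ μ : List (Fin n), ∃ x : A, μ.length = r ∧ x ∈ Wsub φ S k ∧
        a = wordProd S μ * x}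

/-- `V²_{k,r} = Span { x S_γ⋆ : |γ| = r, x ∈ W_k }`. -/
def V2 {A : Type*} [NormedRing A] [NormedAlgebra ℂ A] [StarRing A] {n : ℕ}
    (φ : A →L[ℂ] ℂ) (S : Fin n → A) (k r : ℕ) : Submodule ℂ A :=
  Submodule.span ℂ
    {a | ∃ γ : List (Fin n), ∃ x : A, γ.length = r ∧ x ∈ Wsub φ S k ∧
        a = x * star (wordProd S γ)}

theorem wordProd_append {M : Type*} [Monoid M] {n : ℕ} (S : Fin n → M) (μ ν : List (Fin n)) :
    wordProd S (μ ++ ν) = wordProd S μ * wordProd S ν := by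
  simp only [wordProd, List.map_append, List.prod_append]

theorem wordProd_mul_mul_star_wordProd {M : Type*} [Monoid M] [StarMul M] {n : ℕ}
    (S : Fin n → M) (μ ν α β : List (Fin n)) :
    wordProd S μ * (wordProd S α * star (wordProd S β)) * star (wordProd S ν) =
      wordProd S (μ ++ α) * star (wordProd S (ν ++ β)) := by
  simp only [wordProd_append, star_mul, mul_assoc]

theorem ite_append_eq_ite_mul_ite {ι G : Type*} [DecidableEq ι] [GroupWithZero G] (x : G)
    {μ ν : List ι} (hlen : μ.length = ν.length) (α β : List ι) :
    (if μ ++ α = ν ++ β then (x ^ (μ ++ α).length)⁻¹ else 0) =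
      (if μ = ν then (x ^ μ.length)⁻¹ else 0) * if α = β then (x ^ α.length)⁻¹ else 0 := by
  have happend : μ ++ α = ν ++ β ↔ μ = ν ∧ α = β :=
    ⟨fun h => List.append_inj h hlen, fun ⟨h₁, h₂⟩ => h₁ ▸ h₂ ▸ rfl⟩
  rw [ite_zero_mul_ite_zero]
  simp only [happend, List.length_append, pow_add, (Commute.pow_pow_self x _ _).mul_inv]

theorem kms_sandwich_general
    {A : Type*} [NormedRing A] [StarRing A]
    [NormedAlgebra ℂ A]
    {n : ℕ} (S : Fin n → A)
    (hdense :
      (Submodule.span ℂ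
        {a | ∃ μ ν : List (Fin n),
            a = wordProd S μ * star (wordProd S ν)}).topologicalClosure = ⊤)
    (φ : A →L[ℂ] ℂ)
    (hφ : ∀ μ ν : List (Fin n),
      φ (wordProd S μ * star (wordProd S ν)) =
        if μ = ν then ((n : ℂ) ^ μ.length)⁻¹ else 0)
    (μ ν : List (Fin n)) (hlen : μ.length = ν.length) (a : A) :
    φ (wordProd S μ * a * star (wordProd S ν)) =
      if μ = ν then ((n : ℂ) ^ μ.length)⁻¹ * φ a else 0 := by
  set c : ℂ := if μ = ν then ((n : ℂ) ^ μ.length)⁻¹ else 0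
  have hsandwich :
      φ.comp (ContinuousLinearMap.mulLeftRight ℂ A (wordProd S μ) (star (wordProd S ν))) =
        c • φ := by
    refine ContinuousLinearMap.ext_on
      (Submodule.dense_iff_topologicalClosure_eq_top.mpr hdense) ?_
    rintro _ ⟨α, β, rfl⟩
    simp only [ContinuousLinearMap.comp_apply, ContinuousLinearMap.mulLeftRight_apply,
      smul_apply, smul_eq_mul, wordProd_mul_mul_star_wordProd, hφ]
    exact ite_append_eq_ite_mul_ite _ hlen α β
  have hsandwich_a := DFunLike.congr_fun hsandwich a
  simp only [ContinuousLinearMap.comp_apply, ContinuousLinearMap.mulLeftRight_apply,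
    smul_apply, smul_eq_mul] at hsandwich_a
  rw [hsandwich_a, ite_mul, zero_mul]

/-- For a Cuntz family `S` and the KMS_{log n} functional `φ`,
for words `μ, ν` with `|μ| = |ν|` and any `a ∈ A`:
`φ(S_μ a S_ν⋆) = n^{-|μ|} φ(a)` if `μ = ν`, and `= 0` if `μ ≠ ν`. -/
theorem kms_sandwich
    {A : Type*} [NormedRing A] [StarRing A] [CStarRing A]
    [NormedAlgebra ℂ A] [StarModule ℂ A] [CompleteSpace A]
    {n : ℕ} (hn : 2 ≤ n) (S : Fin n → A)
    (hS1 : ∀ i, star (S i) * S i = 1)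
    (hS2 : ∑ j, S j * star (S j) = 1)
    (hdense :
      (Submodule.span ℂ
        {a | ∃ μ ν : List (Fin n),
            a = wordProd S μ * star (wordProd S ν)}).topologicalClosure = ⊤)
    (φ : A →L[ℂ] ℂ)
    (hφ : ∀ μ ν : List (Fin n),
      φ (wordProd S μ * star (wordProd S ν)) =
        if μ = ν then ((n : ℂ) ^ μ.length)⁻¹ else 0)
    (μ ν : List (Fin n)) (hlen : μ.length = ν.length) (a : A) :
    φ (wordProd S μ * a * star (wordProd S ν)) =
      if μ = ν then ((n : ℂ) ^ μ.length)⁻¹ * φ a else 0 :=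
  kms_sandwich_general S hdense φ hφ μ ν hlen a
end
end

section
/- For every k ≥ 1, the subspace F_k is the φ-orthogonal internal direct sum of F_{k−1} and W_k: one has F_{k−1} ⊆ F_k, every x ∈ F_k can be written as x = y + z with y ∈ F_{k−1} and z ∈ W_k, and F_{k−1} ∩ W_k = {0}. -/
open scoped ComplexOrder

noncomputable section

/-!
The spanning elements `S_μ S_ν⋆` (`|μ| = |ν| = r`) of `F_r` are orthogonal for the form
`⟨a, b⟩ = φ(a⋆ b)`, each of square length `n^{-r}`; this rests on `S_i⋆ S_j = δ_{ij}`, which in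
a C*-algebra is forced by the Cuntz relations. So the form is positive definite on `F_{k-1}`,
which gives `F_{k-1} ∩ W_k = 0`, and subtracting from `x ∈ F_k` its Fourier expansion along this
orthogonal family leaves an element of `W_k`. Finally `F_{k-1} ⊆ F_k` because
`S_μ S_ν⋆ = ∑_j S_{μj} S_{νj}⋆`.
-/

open Submodule Set

@[simp]
theorem wordProd_cons {A : Type*} [Monoid A] {n : ℕ} (S : Fin n → A) (a : Fin n)
    (μ : List (Fin n)) : wordProd S (a :: μ) = S a * wordProd S μ := by
  simp [wordProd]

section CuntzFamily

variable {A : Type*} [NormedRing A] [StarRing A] [CStarRing A] [NormedAlgebra ℂ A]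
  [StarModule ℂ A] [CompleteSpace A] {n : ℕ} {S : Fin n → A}

theorem star_mul_eq_zero_of_ne (hS1 : ∀ i, star (S i) * S i = 1)
    (hS2 : ∑ j, S j * star (S j) = 1) {i j : Fin n} (hij : i ≠ j) :
    star (S i) * S j = 0 := by
  let _ : CStarAlgebra A := {}
  let _ := CStarAlgebra.spectralOrder A
  have := CStarAlgebra.spectralOrderedRing A
  -- `∑ₗ (S_l⋆ S_j)⋆ (S_l⋆ S_j) = S_j⋆ (∑ₗ S_l S_l⋆) S_j = 1`, and the term `l = j` is already `1`.
  have hsum : ∑ l, star (star (S l) * S j) * (star (S l) * S j) = 1 := by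
    simp only [star_mul, star_star, mul_assoc, ← Finset.mul_sum]
    simp only [← mul_assoc, ← Finset.sum_mul, hS2, mul_one, hS1]
  rw [← Finset.add_sum_erase _ _ (Finset.mem_univ j), hS1, star_one, mul_one, add_eq_left,
    Finset.sum_eq_zero_iff_of_nonneg fun l _ => star_mul_self_nonneg _] at hsum
  exact (CStarRing.star_mul_self_eq_zero_iff _).1 (hsum i (by simp [hij]))

theorem star_wordProd_mul_wordProd (hS1 : ∀ i, star (S i) * S i = 1)
    (hS2 : ∑ j, S j * star (S j) = 1) {μ ν : List (Fin n)} (h : μ.length = ν.length) :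
    star (wordProd S μ) * wordProd S ν = if μ = ν then 1 else 0 := by
  induction μ generalizing ν with
  | nil =>
    obtain rfl : ν = [] := List.eq_nil_of_length_eq_zero h.symm
    simp [wordProd]
  | cons a μ ih =>
    obtain ⟨b, ν, rfl⟩ := List.exists_cons_of_length_eq_add_one h.symm
    rw [wordProd_cons, wordProd_cons, star_mul, mul_assoc, ← mul_assoc (star (S a))]
    by_cases hab : a = b
    · subst hab
      rw [hS1, one_mul, ih (by simpa using h)]
      simp
    · simp [star_mul_eq_zero_of_ne hS1 hS2 hab, hab]

end CuntzFamily

section OrthogonalFamily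

variable {A : Type*} [Ring A] [StarRing A] [Algebra ℂ A] [StarModule ℂ A]
  {F : Type*} [FunLike F A ℂ] [LinearMapClass F ℂ A ℂ] (φ : F)
  {ι : Type*} {e : ι → A}

theorem apply_star_mul_eq_zero_of_mem_span {x : A} (hx : ∀ p, φ (star (e p) * x) = 0) {y : A}
    (hy : y ∈ span ℂ (range e)) : φ (star y * x) = 0 := by
  induction hy using span_induction with
  | mem y hy => obtain ⟨p, rfl⟩ := hy; exact hx p
  | zero => simp
  | add y z _ _ hy hz => rw [star_add, add_mul, map_add, hy, hz, add_zero]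
  | smul a y _ h => rw [star_smul, smul_mul_assoc, map_smul, h, smul_zero]

variable [Fintype ι] (horth : Pairwise fun p q => φ (star (e p) * e q) = 0)
include horth

theorem exists_mem_span_forall_apply_star_mul_sub_eq_zero
    (hne : ∀ p, φ (star (e p) * e p) ≠ 0) (x : A) :
    ∃ y ∈ span ℂ (range e), ∀ z ∈ span ℂ (range e), φ (star z * (x - y)) = 0 := by
  refine ⟨∑ p, (φ (star (e p) * x) / φ (star (e p) * e p)) • e p,
    sum_mem fun p _ => smul_mem _ _ (subset_span ⟨p, rfl⟩),
    fun z hz => apply_star_mul_eq_zero_of_mem_span φ (fun q => ?_) hz⟩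
  simp only [mul_sub, Finset.mul_sum, mul_smul_comm, map_sub, map_sum, map_smul, smul_eq_mul]
  rw [Finset.sum_eq_single q (fun p _ hpq => by rw [horth hpq.symm, mul_zero]) (by simp),
    div_mul_cancel₀ _ (hne q), sub_self]

theorem eq_zero_of_mem_span_of_apply_star_mul_self_eq_zero
    (hpos : ∀ p, 0 < φ (star (e p) * e p)) {y : A}
    (hy : y ∈ span ℂ (range e)) (h : φ (star y * y) = 0) : y = 0 := by
  obtain ⟨a, rfl⟩ := (mem_span_range_iff_exists_fun ℂ).1 hy
  have hsum : ∑ p, star (a p) * a p * φ (star (e p) * e p) = 0 := by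
    rw [← h, star_sum, Finset.sum_mul_sum, map_sum]
    refine Finset.sum_congr rfl fun p _ => ?_
    rw [map_sum, Finset.sum_eq_single p (fun q _ hqp => by
      rw [star_smul, smul_mul_smul_comm, map_smul, horth hqp.symm, smul_zero]) (by simp),
      star_smul, smul_mul_smul_comm, map_smul, smul_eq_mul]
  rw [Finset.sum_eq_zero_iff_of_nonneg fun p _ =>
    mul_nonneg (star_mul_self_nonneg _) (hpos p).le] at hsum
  refine Finset.sum_eq_zero fun p _ => ?_
  have hp : a p = 0 := by simpa [(hpos p).ne'] using hsum p (Finset.mem_univ p)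
  rw [hp, zero_smul]

end OrthogonalFamily

theorem Bspan_le_Bspan_succ {A : Type*} [Ring A] [Algebra ℂ A] [StarRing A] {n : ℕ}
    {S : Fin n → A} (hS2 : ∑ j, S j * star (S j) = 1) (r : ℕ) :
    Bspan S r r ≤ Bspan S (r + 1) (r + 1) := by
  refine span_le.2 ?_
  rintro _ ⟨μ, ν, hμ, hν, rfl⟩
  have hsplit : wordProd S μ * star (wordProd S ν) =
      ∑ j, wordProd S (μ ++ [j]) * star (wordProd S (ν ++ [j])) := by
    have hj : ∀ j, wordProd S (μ ++ [j]) * star (wordProd S (ν ++ [j])) =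
        wordProd S μ * (S j * star (S j)) * star (wordProd S ν) := by
      simp [wordProd, mul_assoc]
    simp only [hj, ← Finset.sum_mul, ← Finset.mul_sum, hS2, mul_one]
  rw [hsplit]
  exact sum_mem fun j _ => subset_span ⟨μ ++ [j], ν ++ [j], by simp [hμ], by simp [hν], rfl⟩

def wordMatrixUnit {A : Type*} [Monoid A] [StarMul A] {n : ℕ} (S : Fin n → A) (r : ℕ)
    (p : List.Vector (Fin n) r × List.Vector (Fin n) r) : A :=
  wordProd S p.1.toList * star (wordProd S p.2.toList)

theorem Bspan_eq_span_range_wordMatrixUnit {A : Type*} [Ring A] [Algebra ℂ A] [StarRing A]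
    {n : ℕ} (S : Fin n → A) (r : ℕ) :
    Bspan S r r = span ℂ (range (wordMatrixUnit S r)) := by
  refine congrArg _ (Set.ext fun a => ⟨?_, ?_⟩)
  · rintro ⟨μ, ν, hμ, hν, rfl⟩
    exact ⟨(⟨μ, hμ⟩, ⟨ν, hν⟩), rfl⟩
  · rintro ⟨p, rfl⟩
    exact ⟨_, _, p.1.2, p.2.2, rfl⟩

theorem apply_star_wordMatrixUnit_mul {A : Type*} [NormedRing A] [StarRing A] [CStarRing A]
    [NormedAlgebra ℂ A] [StarModule ℂ A] [CompleteSpace A] {n : ℕ} {S : Fin n → A}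
    (hS1 : ∀ i, star (S i) * S i = 1) (hS2 : ∑ j, S j * star (S j) = 1)
    {F : Type*} [FunLike F A ℂ] [LinearMapClass F ℂ A ℂ] {φ : F}
    (hφ : ∀ μ ν : List (Fin n), φ (wordProd S μ * star (wordProd S ν)) =
      if μ = ν then ((n : ℂ) ^ μ.length)⁻¹ else 0)
    {r : ℕ} (p q : List.Vector (Fin n) r × List.Vector (Fin n) r) :
    φ (star (wordMatrixUnit S r p) * wordMatrixUnit S r q) =
      if p = q then ((n : ℂ) ^ r)⁻¹ else 0 := by
  have hmid : star (wordMatrixUnit S r p) * wordMatrixUnit S r q =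
      wordProd S p.2.toList * (star (wordProd S p.1.toList) * wordProd S q.1.toList) *
        star (wordProd S q.2.toList) := by
    simp [wordMatrixUnit, mul_assoc]
  rw [hmid, star_wordProd_mul_wordProd hS1 hS2 (by simp)]
  by_cases h1 : p.1 = q.1
  · simp [h1, hφ, Prod.ext_iff, List.Vector.toList_injective.eq_iff]
  · simp [h1, Prod.ext_iff, List.Vector.toList_injective.eq_iff]

theorem mem_Wsub_succ_iff {A : Type*} [NormedRing A] [NormedAlgebra ℂ A] [StarRing A] {n : ℕ}
    {φ : A →L[ℂ] ℂ} {S : Fin n → A} {k : ℕ} {x : A} :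
    x ∈ Wsub φ S (k + 1) ↔
      x ∈ Bspan S (k + 1) (k + 1) ∧ ∀ y ∈ Bspan S k k, φ (star y * x) = 0 := by
  simp [Wsub]

theorem Fk_direct_sum_decomposition_general
    {A : Type*} [NormedRing A] [StarRing A] [CStarRing A]
    [NormedAlgebra ℂ A] [StarModule ℂ A] [CompleteSpace A]
    {n : ℕ} (S : Fin n → A)
    (hS1 : ∀ i, star (S i) * S i = 1)
    (hS2 : ∑ j, S j * star (S j) = 1)
    (φ : A →L[ℂ] ℂ)
    (hφ : ∀ μ ν : List (Fin n),
      φ (wordProd S μ * star (wordProd S ν)) =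
        if μ = ν then ((n : ℂ) ^ μ.length)⁻¹ else 0)
    (k : ℕ) (hk : 1 ≤ k) :
    Bspan S (k - 1) (k - 1) ≤ Bspan S k k ∧
    (∀ x ∈ Bspan S k k,
        ∃ y ∈ Bspan S (k - 1) (k - 1), ∃ z ∈ Wsub φ S k, x = y + z) ∧
    Bspan S (k - 1) (k - 1) ⊓ Wsub φ S k = ⊥ := by
  obtain ⟨r, rfl⟩ := Nat.exists_eq_add_of_le' hk
  rw [Nat.add_sub_cancel]
  have he := apply_star_wordMatrixUnit_mul hS1 hS2 hφ (r := r)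
  have horth : Pairwise fun p q => φ (star (wordMatrixUnit S r p) * wordMatrixUnit S r q) = 0 :=
    fun p q hpq => by simp [he, hpq]
  have hpos : ∀ p, 0 < φ (star (wordMatrixUnit S r p) * wordMatrixUnit S r p) := by
    rintro ⟨μ, -⟩
    rw [he, if_pos rfl]
    rcases r with _ | r
    · simp
    · have : 0 < n := μ.head.pos
      positivity
  have hF := Bspan_eq_span_range_wordMatrixUnit S r
  refine ⟨Bspan_le_Bspan_succ hS2 r, fun x hx => ?_, ?_⟩
  · obtain ⟨y, hy, hxy⟩ := exists_mem_span_forall_apply_star_mul_sub_eq_zero φ horth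
      (fun p => (hpos p).ne') x
    rw [← hF] at hy hxy
    exact ⟨y, hy, x - y,
      mem_Wsub_succ_iff.2 ⟨sub_mem hx (Bspan_le_Bspan_succ hS2 r hy), hxy⟩, by abel⟩
  · refine eq_bot_iff.2 fun y ⟨hyF, hyW⟩ => ?_
    have hyy : φ (star y * y) = 0 := (mem_Wsub_succ_iff.1 hyW).2 y hyF
    exact eq_zero_of_mem_span_of_apply_star_mul_self_eq_zero φ horth hpos (hF ▸ hyF) hyy

/-- For every `k ≥ 1`, `F_k` is the φ-orthogonal internal direct sum of
`F_{k-1}` and `W_k`: `F_{k-1} ⊆ F_k`, every `x ∈ F_k` decomposes as `x = y + z` with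
`y ∈ F_{k-1}`, `z ∈ W_k`, and `F_{k-1} ∩ W_k = {0}`. -/
theorem Fk_direct_sum_decomposition
    {A : Type*} [NormedRing A] [StarRing A] [CStarRing A]
    [NormedAlgebra ℂ A] [StarModule ℂ A] [CompleteSpace A]
    {n : ℕ} (hn : 2 ≤ n) (S : Fin n → A)
    (hS1 : ∀ i, star (S i) * S i = 1)
    (hS2 : ∑ j, S j * star (S j) = 1)
    (φ : A →L[ℂ] ℂ)
    (hφ : ∀ μ ν : List (Fin n),
      φ (wordProd S μ * star (wordProd S ν)) =
        if μ = ν then ((n : ℂ) ^ μ.length)⁻¹ else 0)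
    (k : ℕ) (hk : 1 ≤ k) :
    Bspan S (k - 1) (k - 1) ≤ Bspan S k k ∧
    (∀ x ∈ Bspan S k k,
        ∃ y ∈ Bspan S (k - 1) (k - 1), ∃ z ∈ Wsub φ S k, x = y + z) ∧
    Bspan S (k - 1) (k - 1) ⊓ Wsub φ S k = ⊥ :=
  Fk_direct_sum_decomposition_general S hS1 hS2 φ hφ k hk
end
end
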